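/- Let A be a unital ℂ-algebra and consider the free wreath product ℋ = A *_w 𝒜_t(2) (case n = 2). Then in ℋ the images of the generators of 𝒜_t(2) satisfy x_{11} = x_{22} and x_{12} = x_{21}, every element of the image of 𝒜_t(2) commutes with every element of the image of A^{*2}, and there is a ℂ-algebra isomorphism ℋ ≅ A^{*2} ⊗ (ℂ × ℂ) sending ν_i(a) to ν_i(a) ⊗ 1 (i = 1,2) and x_{11} to 1 ⊗ (1,0) and x_{12} to 1 ⊗ (0,1). -/

import Mathlib

open scoped TensorProduct

noncomputable section

/-- Relations presenting the free wreath product `A *_w 𝒜_t(n)`.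
Generators: `Sum.inl (i, a)` is `ν_i(a)`, `Sum.inr (i, j)` is `x_{ij}`. -/
inductive FWRel (A : Type) [Ring A] [Algebra ℂ A] (n : ℕ) :
    FreeAlgebra ℂ ((Fin n × A) ⊕ (Fin n × Fin n)) →
      FreeAlgebra ℂ ((Fin n × A) ⊕ (Fin n × Fin n)) → Prop
  | nu_add (i : Fin n) (a b : A) :
      FWRel A n (FreeAlgebra.ι ℂ (Sum.inl (i, a)) + FreeAlgebra.ι ℂ (Sum.inl (i, b)))
        (FreeAlgebra.ι ℂ (Sum.inl (i, a + b)))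
  | nu_mul (i : Fin n) (a b : A) :
      FWRel A n (FreeAlgebra.ι ℂ (Sum.inl (i, a)) * FreeAlgebra.ι ℂ (Sum.inl (i, b)))
        (FreeAlgebra.ι ℂ (Sum.inl (i, a * b)))
  | nu_smul (i : Fin n) (c : ℂ) (a : A) :
      FWRel A n (c • FreeAlgebra.ι ℂ (Sum.inl (i, a))) (FreeAlgebra.ι ℂ (Sum.inl (i, c • a)))
  | nu_one (i : Fin n) : FWRel A n (FreeAlgebra.ι ℂ (Sum.inl (i, (1 : A)))) 1
  | x_row (i j k : Fin n) :
      FWRel A n (FreeAlgebra.ι ℂ (Sum.inr (i, j)) * FreeAlgebra.ι ℂ (Sum.inr (i, k)))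
        (if j = k then FreeAlgebra.ι ℂ (Sum.inr (i, j)) else 0)
  | x_col (i j k : Fin n) :
      FWRel A n (FreeAlgebra.ι ℂ (Sum.inr (j, i)) * FreeAlgebra.ι ℂ (Sum.inr (k, i)))
        (if j = k then FreeAlgebra.ι ℂ (Sum.inr (j, i)) else 0)
  | x_rowSum (i : Fin n) : FWRel A n (∑ l : Fin n, FreeAlgebra.ι ℂ (Sum.inr (i, l))) 1
  | x_colSum (i : Fin n) : FWRel A n (∑ l : Fin n, FreeAlgebra.ι ℂ (Sum.inr (l, i))) 1
  | comm (i k : Fin n) (a : A) :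
      FWRel A n (FreeAlgebra.ι ℂ (Sum.inl (k, a)) * FreeAlgebra.ι ℂ (Sum.inr (k, i)))
        (FreeAlgebra.ι ℂ (Sum.inr (k, i)) * FreeAlgebra.ι ℂ (Sum.inl (k, a)))

/-- The free wreath product `A *_w 𝒜_t(n)`. -/
abbrev FW (A : Type) [Ring A] [Algebra ℂ A] (n : ℕ) : Type := RingQuot (FWRel A n)

/-- The image of `ν_i(a)` in `A *_w 𝒜_t(n)`. -/
def wnu (A : Type) [Ring A] [Algebra ℂ A] (n : ℕ) (i : Fin n) (a : A) : FW A n :=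
  RingQuot.mkAlgHom ℂ (FWRel A n) (FreeAlgebra.ι ℂ (Sum.inl (i, a)))

/-- The image of `x_{ij}` in `A *_w 𝒜_t(n)`. -/
def wx (A : Type) [Ring A] [Algebra ℂ A] (n : ℕ) (i j : Fin n) : FW A n :=
  RingQuot.mkAlgHom ℂ (FWRel A n) (FreeAlgebra.ι ℂ (Sum.inr (i, j)))

/-- `ν_i` as a `ℂ`-linear map `A →ₗ[ℂ] A *_w 𝒜_t(n)`. -/
def wnuL (A : Type) [Ring A] [Algebra ℂ A] (n : ℕ) (i : Fin n) : A →ₗ[ℂ] FW A n where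
  toFun := wnu A n i
  map_add' a b := by
    have h := RingQuot.mkAlgHom_rel ℂ (FWRel.nu_add (A := A) (n := n) i a b)
    simp only [map_add] at h
    exact h.symm
  map_smul' c a := by
    have h := RingQuot.mkAlgHom_rel ℂ (FWRel.nu_smul (A := A) (n := n) i c a)
    simp only [map_smul] at h
    simp only [RingHom.id_apply]
    exact h.symm


/-- Relations presenting the `n`-fold free product `A^{*n}`. -/
inductive FreePowRel (A : Type) [Ring A] [Algebra ℂ A] (n : ℕ) :
    FreeAlgebra ℂ (Fin n × A) → FreeAlgebra ℂ (Fin n × A) → Prop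
  | add (i : Fin n) (a b : A) :
      FreePowRel A n (FreeAlgebra.ι ℂ (i, a) + FreeAlgebra.ι ℂ (i, b))
        (FreeAlgebra.ι ℂ (i, a + b))
  | mul (i : Fin n) (a b : A) :
      FreePowRel A n (FreeAlgebra.ι ℂ (i, a) * FreeAlgebra.ι ℂ (i, b))
        (FreeAlgebra.ι ℂ (i, a * b))
  | smul (i : Fin n) (c : ℂ) (a : A) :
      FreePowRel A n (c • FreeAlgebra.ι ℂ (i, a)) (FreeAlgebra.ι ℂ (i, c • a))
  | one (i : Fin n) : FreePowRel A n (FreeAlgebra.ι ℂ (i, (1 : A))) 1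

/-- The `n`-fold free product `A^{*n}`. -/
abbrev FreePow (A : Type) [Ring A] [Algebra ℂ A] (n : ℕ) : Type := RingQuot (FreePowRel A n)

/-- The canonical morphism `ν_i : A → A^{*n}` (as a function). -/
def nu (A : Type) [Ring A] [Algebra ℂ A] (n : ℕ) (i : Fin n) (a : A) : FreePow A n :=
  RingQuot.mkAlgHom ℂ (FreePowRel A n) (FreeAlgebra.ι ℂ (i, a))

namespace Stmt8Aux

variable (A : Type) [Ring A] [Algebra ℂ A]

-- basic relations in FW A 2
lemma wnu_add (i : Fin 2) (a b : A) : wnu A 2 i a + wnu A 2 i b = wnu A 2 i (a + b) := by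
  have h := RingQuot.mkAlgHom_rel ℂ (FWRel.nu_add (A := A) (n := 2) i a b)
  simpa [wnu] using h

lemma wnu_mul (i : Fin 2) (a b : A) : wnu A 2 i a * wnu A 2 i b = wnu A 2 i (a * b) := by
  have h := RingQuot.mkAlgHom_rel ℂ (FWRel.nu_mul (A := A) (n := 2) i a b)
  simpa [wnu] using h

lemma wnu_smul (i : Fin 2) (c : ℂ) (a : A) : c • wnu A 2 i a = wnu A 2 i (c • a) := by
  have h := RingQuot.mkAlgHom_rel ℂ (FWRel.nu_smul (A := A) (n := 2) i c a)
  simpa [wnu] using h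

lemma wnu_one (i : Fin 2) : wnu A 2 i (1 : A) = 1 := by
  have h := RingQuot.mkAlgHom_rel ℂ (FWRel.nu_one (A := A) (n := 2) i)
  simpa [wnu] using h

lemma xrow (i j k : Fin 2) :
    wx A 2 i j * wx A 2 i k = if j = k then wx A 2 i j else 0 := by
  have h := RingQuot.mkAlgHom_rel ℂ (FWRel.x_row (A := A) (n := 2) i j k)
  simpa [wx, apply_ite (RingQuot.mkAlgHom ℂ (FWRel A 2))] using h

lemma rowSum (i : Fin 2) : wx A 2 i 0 + wx A 2 i 1 = 1 := by
  have h := RingQuot.mkAlgHom_rel ℂ (FWRel.x_rowSum (A := A) (n := 2) i)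
  simpa [wx, Fin.sum_univ_two] using h

lemma colSum (i : Fin 2) : wx A 2 0 i + wx A 2 1 i = 1 := by
  have h := RingQuot.mkAlgHom_rel ℂ (FWRel.x_colSum (A := A) (n := 2) i)
  simpa [wx, Fin.sum_univ_two] using h

lemma comm_rel (i k : Fin 2) (a : A) :
    wnu A 2 k a * wx A 2 k i = wx A 2 k i * wnu A 2 k a := by
  have h := RingQuot.mkAlgHom_rel ℂ (FWRel.comm (A := A) (n := 2) i k a)
  simpa [wnu, wx] using h

lemma eq_offdiag : wx A 2 0 1 = wx A 2 1 0 := by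
  have h1 := rowSum A 0
  have h2 := colSum A 0
  have := h1.trans h2.symm
  exact add_left_cancel this

lemma eq_diag : wx A 2 0 0 = wx A 2 1 1 := by
  have h1 := rowSum A 0
  have h2 := colSum A 1
  have : wx A 2 0 0 + wx A 2 0 1 = wx A 2 1 1 + wx A 2 0 1 := by
    rw [h1, add_comm, h2]
  exact add_right_cancel this

lemma commute_gen (k : Fin 2) (a : A) (i j : Fin 2) :
    Commute (wnu A 2 k a) (wx A 2 i j) := by
  have h0 : ∀ m, Commute (wnu A 2 (0 : Fin 2) a) (wx A 2 0 m) :=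
    fun m => (comm_rel A m 0 a)
  have h1 : ∀ m, Commute (wnu A 2 (1 : Fin 2) a) (wx A 2 1 m) :=
    fun m => (comm_rel A m 1 a)
  fin_cases k <;> fin_cases i <;> fin_cases j
  · exact h0 0
  · exact h0 1
  · exact (eq_offdiag A) ▸ h0 1
  · exact (eq_diag A) ▸ h0 0
  · exact (eq_diag A).symm ▸ h1 1
  · exact (eq_offdiag A).symm ▸ h1 0
  · exact h1 0
  · exact h1 1

-- analogous relations in FreePow A 2
lemma nu_add (i : Fin 2) (a b : A) : nu A 2 i a + nu A 2 i b = nu A 2 i (a + b) := by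
  have h := RingQuot.mkAlgHom_rel ℂ (FreePowRel.add (A := A) (n := 2) i a b)
  simpa [nu] using h

lemma nu_mul (i : Fin 2) (a b : A) : nu A 2 i a * nu A 2 i b = nu A 2 i (a * b) := by
  have h := RingQuot.mkAlgHom_rel ℂ (FreePowRel.mul (A := A) (n := 2) i a b)
  simpa [nu] using h

lemma nu_smul (i : Fin 2) (c : ℂ) (a : A) : c • nu A 2 i a = nu A 2 i (c • a) := by
  have h := RingQuot.mkAlgHom_rel ℂ (FreePowRel.smul (A := A) (n := 2) i c a)
  simpa [nu] using h

lemma nu_one (i : Fin 2) : nu A 2 i (1 : A) = 1 := by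
  have h := RingQuot.mkAlgHom_rel ℂ (FreePowRel.one (A := A) (n := 2) i)
  simpa [nu] using h

/-- the idempotents in ℂ × ℂ -/
def e (i j : Fin 2) : ℂ × ℂ := if i = j then (1, 0) else (0, 1)

lemma e_mul (i j k : Fin 2) : e i j * e i k = if j = k then e i j else 0 := by
  fin_cases i <;> fin_cases j <;> fin_cases k <;>
    simp [e, Prod.ext_iff]

lemma e_mul_col (i j k : Fin 2) : e j i * e k i = if j = k then e j i else 0 := by
  fin_cases i <;> fin_cases j <;> fin_cases k <;>
    simp [e, Prod.ext_iff]

lemma e_rowSum (i : Fin 2) : e i 0 + e i 1 = 1 := by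
  fin_cases i <;> simp [e, Prod.ext_iff]

lemma e_colSum (i : Fin 2) : e 0 i + e 1 i = 1 := by
  fin_cases i <;> simp [e, Prod.ext_iff]

/-- forward map on the free algebra -/
def phi0 : FreeAlgebra ℂ ((Fin 2 × A) ⊕ (Fin 2 × Fin 2)) →ₐ[ℂ]
    TensorProduct ℂ (FreePow A 2) (ℂ × ℂ) :=
  FreeAlgebra.lift ℂ (fun s => match s with
    | Sum.inl (i, a) => TensorProduct.tmul ℂ (nu A 2 i a) (1 : ℂ × ℂ)
    | Sum.inr (i, j) => TensorProduct.tmul ℂ (1 : FreePow A 2) (e i j))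

lemma phi0_rel : ∀ ⦃x y⦄, FWRel A 2 x y → phi0 A x = phi0 A y := by
  intro x y h
  induction h with
  | nu_add i a b =>
      simp only [map_add, phi0, FreeAlgebra.lift_ι_apply]
      rw [← TensorProduct.add_tmul, nu_add]
  | nu_mul i a b =>
      simp only [map_mul, phi0, FreeAlgebra.lift_ι_apply]
      rw [Algebra.TensorProduct.tmul_mul_tmul, one_mul, nu_mul]
  | nu_smul i c a =>
      simp only [map_smul, phi0, FreeAlgebra.lift_ι_apply]
      rw [TensorProduct.smul_tmul', nu_smul]
  | nu_one i =>
      simp only [phi0, FreeAlgebra.lift_ι_apply, map_one]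
      rw [nu_one, Algebra.TensorProduct.one_def]
  | x_row i j k =>
      simp only [map_mul, phi0, FreeAlgebra.lift_ι_apply, apply_ite, map_zero]
      rw [Algebra.TensorProduct.tmul_mul_tmul, one_mul, e_mul]
      split <;> simp
  | x_col i j k =>
      simp only [map_mul, phi0, FreeAlgebra.lift_ι_apply, apply_ite, map_zero]
      rw [Algebra.TensorProduct.tmul_mul_tmul, one_mul, e_mul_col]
      split <;> simp
  | x_rowSum i =>
      simp only [map_sum, Fin.sum_univ_two, map_add, phi0, FreeAlgebra.lift_ι_apply, map_one]
      rw [← TensorProduct.tmul_add, e_rowSum, Algebra.TensorProduct.one_def]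
  | x_colSum i =>
      simp only [map_sum, Fin.sum_univ_two, map_add, phi0, FreeAlgebra.lift_ι_apply, map_one]
      rw [← TensorProduct.tmul_add, e_colSum, Algebra.TensorProduct.one_def]
  | comm i k a =>
      simp only [map_mul, phi0, FreeAlgebra.lift_ι_apply]
      rw [Algebra.TensorProduct.tmul_mul_tmul, Algebra.TensorProduct.tmul_mul_tmul,
        one_mul, mul_one, one_mul, mul_one]

def phi : FW A 2 →ₐ[ℂ] TensorProduct ℂ (FreePow A 2) (ℂ × ℂ) :=
  RingQuot.liftAlgHom ℂ ⟨phi0 A, phi0_rel A⟩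

@[simp] lemma phi_wnu (i : Fin 2) (a : A) :
    phi A (wnu A 2 i a) = TensorProduct.tmul ℂ (nu A 2 i a) (1 : ℂ × ℂ) := by
  rw [phi, wnu, RingQuot.liftAlgHom_mkAlgHom_apply, phi0, FreeAlgebra.lift_ι_apply]

@[simp] lemma phi_wx (i j : Fin 2) :
    phi A (wx A 2 i j) = TensorProduct.tmul ℂ (1 : FreePow A 2) (e i j) := by
  rw [phi, wx, RingQuot.liftAlgHom_mkAlgHom_apply, phi0, FreeAlgebra.lift_ι_apply]

/-- left factor of the inverse -/
def f0 : FreeAlgebra ℂ (Fin 2 × A) →ₐ[ℂ] FW A 2 :=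
  FreeAlgebra.lift ℂ (fun p => wnu A 2 p.1 p.2)

lemma f0_rel : ∀ ⦃x y⦄, FreePowRel A 2 x y → f0 A x = f0 A y := by
  intro x y h
  induction h with
  | add i a b => simp only [map_add, f0, FreeAlgebra.lift_ι_apply]; exact wnu_add A i a b
  | mul i a b => simp only [map_mul, f0, FreeAlgebra.lift_ι_apply]; exact wnu_mul A i a b
  | smul i c a => simp only [map_smul, f0, FreeAlgebra.lift_ι_apply]; exact wnu_smul A i c a
  | one i => simp only [map_one, f0, FreeAlgebra.lift_ι_apply]; exact wnu_one A i

def f : FreePow A 2 →ₐ[ℂ] FW A 2 :=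
  RingQuot.liftAlgHom ℂ ⟨f0 A, f0_rel A⟩

@[simp] lemma f_nu (i : Fin 2) (a : A) : f A (nu A 2 i a) = wnu A 2 i a := by
  rw [f, nu, RingQuot.liftAlgHom_mkAlgHom_apply, f0, FreeAlgebra.lift_ι_apply]

/-- right factor of the inverse -/
def g : (ℂ × ℂ) →ₐ[ℂ] FW A 2 :=
  AlgHom.ofLinearMap
    ((LinearMap.fst ℂ ℂ ℂ).smulRight (wx A 2 0 0) +
      (LinearMap.snd ℂ ℂ ℂ).smulRight (wx A 2 0 1))
    (by
      simp only [LinearMap.add_apply, LinearMap.smulRight_apply, LinearMap.fst_apply,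
        LinearMap.snd_apply, Prod.fst_one, Prod.snd_one, one_smul]
      exact rowSum A 0)
    (by
      intro p q
      have hXX : wx A 2 0 0 * wx A 2 0 0 = wx A 2 0 0 := by simpa using xrow A 0 0 0
      have hXY : wx A 2 0 0 * wx A 2 0 1 = 0 := by simpa using xrow A 0 0 1
      have hYX : wx A 2 0 1 * wx A 2 0 0 = 0 := by simpa using xrow A 0 1 0
      have hYY : wx A 2 0 1 * wx A 2 0 1 = wx A 2 0 1 := by simpa using xrow A 0 1 1
      simp only [LinearMap.add_apply, LinearMap.smulRight_apply, LinearMap.fst_apply,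
        LinearMap.snd_apply, Prod.fst_mul, Prod.snd_mul, add_mul, mul_add,
        smul_mul_assoc, mul_smul_comm, hXX, hXY, hYX, hYY, smul_zero, add_zero, zero_add,
        smul_smul, mul_comm]
      )

@[simp] lemma g_apply (p : ℂ × ℂ) : g A p = p.1 • wx A 2 0 0 + p.2 • wx A 2 0 1 := rfl

lemma commute_fg : ∀ (x : FreePow A 2) (y : ℂ × ℂ), Commute (f A x) (g A y) := by
  intro x y
  obtain ⟨z, rfl⟩ := RingQuot.mkAlgHom_surjective ℂ (FreePowRel A 2) x
  rw [f, RingQuot.liftAlgHom_mkAlgHom_apply]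
  induction z using FreeAlgebra.induction with
  | grade0 r => rw [AlgHom.commutes]; exact Algebra.commutes r _
  | grade1 p =>
      rw [f0, FreeAlgebra.lift_ι_apply, g_apply]
      exact ((commute_gen A p.1 p.2 0 0).smul_right y.1).add_right
        ((commute_gen A p.1 p.2 0 1).smul_right y.2)
  | mul a b ha hb => rw [map_mul]; exact ha.mul_left hb
  | add a b ha hb => rw [map_add]; exact ha.add_left hb

def psi : TensorProduct ℂ (FreePow A 2) (ℂ × ℂ) →ₐ[ℂ] FW A 2 :=
  Algebra.TensorProduct.lift (f A) (g A) (commute_fg A)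

lemma psi_phi : (psi A).comp (phi A) = AlgHom.id ℂ (FW A 2) := by
  apply RingQuot.ringQuot_ext'
  apply FreeAlgebra.hom_ext
  funext s
  rcases s with ⟨i, a⟩ | ⟨i, j⟩
  · show (psi A) ((phi A) (wnu A 2 i a)) = wnu A 2 i a
    rw [phi_wnu, psi, Algebra.TensorProduct.lift_tmul, f_nu, map_one, mul_one]
  · show (psi A) ((phi A) (wx A 2 i j)) = wx A 2 i j
    rw [phi_wx, psi, Algebra.TensorProduct.lift_tmul, map_one, one_mul, g_apply]
    fin_cases i <;> fin_cases j <;>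
      simp [e, eq_offdiag A, eq_diag A]

lemma phi_psi : (phi A).comp (psi A) = AlgHom.id ℂ (TensorProduct ℂ (FreePow A 2) (ℂ × ℂ)) := by
  apply Algebra.TensorProduct.ext
  · apply RingQuot.ringQuot_ext'
    apply FreeAlgebra.hom_ext
    funext p
    show (phi A) ((psi A) (TensorProduct.tmul ℂ (nu A 2 p.1 p.2) 1)) =
      TensorProduct.tmul ℂ (nu A 2 p.1 p.2) 1
    rw [psi, Algebra.TensorProduct.lift_tmul, f_nu, map_one, mul_one, phi_wnu]
  · apply AlgHom.ext
    intro p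
    have hp : p = p.1 • ((1, 0) : ℂ × ℂ) + p.2 • ((0, 1) : ℂ × ℂ) := by
      simp [Prod.ext_iff]
    have h10 : (phi A) ((psi A) (TensorProduct.tmul ℂ (1 : FreePow A 2) ((1,0) : ℂ × ℂ))) =
        TensorProduct.tmul ℂ (1 : FreePow A 2) ((1,0) : ℂ × ℂ) := by
      rw [psi, Algebra.TensorProduct.lift_tmul, map_one, one_mul, g_apply]
      simp only [one_smul, zero_smul, add_zero, phi_wx]
      rfl
    have h01 : (phi A) ((psi A) (TensorProduct.tmul ℂ (1 : FreePow A 2) ((0,1) : ℂ × ℂ))) =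
        TensorProduct.tmul ℂ (1 : FreePow A 2) ((0,1) : ℂ × ℂ) := by
      rw [psi, Algebra.TensorProduct.lift_tmul, map_one, one_mul, g_apply]
      simp only [one_smul, zero_smul, zero_add, phi_wx]
      rfl
    show (phi A) ((psi A) (TensorProduct.tmul ℂ (1 : FreePow A 2) p)) =
      TensorProduct.tmul ℂ (1 : FreePow A 2) p
    conv_lhs => rw [hp]
    rw [TensorProduct.tmul_add, TensorProduct.tmul_smul, TensorProduct.tmul_smul,
      map_add, map_add, map_smul, map_smul, map_smul, map_smul, h10, h01]
    conv_rhs => rw [hp]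
    rw [TensorProduct.tmul_add, TensorProduct.tmul_smul, TensorProduct.tmul_smul]

def iso : FW A 2 ≃ₐ[ℂ] TensorProduct ℂ (FreePow A 2) (ℂ × ℂ) :=
  AlgEquiv.ofAlgHom (phi A) (psi A) (phi_psi A) (psi_phi A)

end Stmt8Aux

/-- For a unital `ℂ`-algebra `A` and `ℋ = A *_w 𝒜_t(2)`: one has
`x_{11} = x_{22}` and `x_{12} = x_{21}` in `ℋ`, the image of `𝒜_t(2)` commutes with the
image of `A^{*2}`, and `ℋ ≅ A^{*2} ⊗ (ℂ × ℂ)` via `ν_i(a) ↦ ν_i(a) ⊗ 1`,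
`x_{11} ↦ 1 ⊗ (1,0)`, `x_{12} ↦ 1 ⊗ (0,1)`. -/
theorem stmt_8 (A : Type) [Ring A] [Algebra ℂ A] :
    (wx A 2 0 0 = wx A 2 1 1) ∧ (wx A 2 0 1 = wx A 2 1 0) ∧
    (∀ b ∈ Algebra.adjoin ℂ (Set.range fun q : Fin 2 × A => wnu A 2 q.1 q.2),
      ∀ c ∈ Algebra.adjoin ℂ (Set.range fun q : Fin 2 × Fin 2 => wx A 2 q.1 q.2),
        b * c = c * b) ∧
    Nonempty
      {iso : FW A 2 ≃ₐ[ℂ] (TensorProduct ℂ (FreePow A 2) (ℂ × ℂ)) //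
        (∀ (i : Fin 2) (a : A),
          iso (wnu A 2 i a) = TensorProduct.tmul ℂ (nu A 2 i a) (1 : ℂ × ℂ)) ∧
        iso (wx A 2 0 0) = TensorProduct.tmul ℂ (1 : FreePow A 2) ((1, 0) : ℂ × ℂ) ∧
        iso (wx A 2 0 1) = TensorProduct.tmul ℂ (1 : FreePow A 2) ((0, 1) : ℂ × ℂ)} := by
  refine ⟨(Stmt8Aux.eq_diag A), (Stmt8Aux.eq_offdiag A), ?_, ?_⟩
  · intro b hb c hc
    induction hc using Algebra.adjoin_induction with
    | mem x hx =>
        obtain ⟨q, rfl⟩ := hx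
        induction hb using Algebra.adjoin_induction with
        | mem y hy =>
            obtain ⟨p, rfl⟩ := hy
            exact Stmt8Aux.commute_gen A p.1 p.2 q.1 q.2
        | algebraMap r => exact (Algebra.commutes r _)
        | add y z hy hz h1 h2 => rw [add_mul, mul_add, h1, h2]
        | mul y z hy hz h1 h2 =>
            rw [mul_assoc, h2, ← mul_assoc, h1, mul_assoc]
    | algebraMap r => exact (Algebra.commutes r b).symm
    | add y z hy hz h1 h2 => rw [mul_add, add_mul, h1, h2]
    | mul y z hy hz h1 h2 =>
        rw [← mul_assoc, h1, mul_assoc, h2, ← mul_assoc]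
  · refine ⟨⟨Stmt8Aux.iso A, ?_, ?_, ?_⟩⟩
    · intro i a
      exact Stmt8Aux.phi_wnu A i a
    · exact Stmt8Aux.phi_wx A 0 0
    · exact Stmt8Aux.phi_wx A 0 1
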